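/- Suppose the system is operated under the MaxWeight policy with weight matrix D and ρ ∉ 𝒫, and let η := lim_{t→∞} X(t)/t (which exists). Then η is the unique minimizer of the convex program min ⟨x, D·x⟩ over x ∈ Ψ(ρ,𝒮); that is, ⟨η, D·η⟩ ≤ ⟨x, D·x⟩ for every x ∈ Ψ(ρ,𝒮), with equality only when x = η. -/

import Mathlib

/-! Let `α` be a limit point of the empirical frequencies with which the policy uses each service
vector. A queue whose workload grows linearly is eventually never idle, and no queue is served
faster than offered, so `η = (ρ - ∑ α_m S_m)⁺`. MaxWeight picks a maximizer of
`⟨S, D X(t)/t⟩`, so in the limit `⟨S_j, Dη⟩ ≤ ∑ α_m ⟨S_m, Dη⟩` for every `j`: this is the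
first-order optimality condition of `⟨x, Dx⟩` on `Ψ(ρ,𝒮)`. Quadratic growth around `η` follows from
the pointwise inequality `(b⁺ - a⁺)² ≤ (b⁺)² - (a⁺)² - 2a⁺(b - a)`, summed with weights `d_q`. -/

open Finset Filter Topology

/-- The stability region: loads dominated by a convex combination of service vectors. -/
def stabRegion {Q N : ℕ} (S : Fin N → Fin Q → ℝ) : Set (Fin Q → ℝ) :=
  {r | (∀ q, 0 ≤ r q) ∧ ∃ α : Fin N → ℝ, (∀ i, 0 ≤ α i) ∧ (∑ i, α i) = 1 ∧
    ∀ q, r q ≤ ∑ i, α i * S i q}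

/-- The set Ψ(ρ,𝒮) = {(ρ − Σ α_m S_m)⁺ : α ≥ 0, Σ α ≤ 1}. -/
def Psi {Q N : ℕ} (ρ : Fin Q → ℝ) (S : Fin N → Fin Q → ℝ) : Set (Fin Q → ℝ) :=
  {x | ∃ α : Fin N → ℝ, (∀ m, 0 ≤ α m) ∧ (∑ m, α m) ≤ 1 ∧
    x = fun q => max (ρ q - ∑ m, α m * S m q) 0}

lemma sq_max_zero_sub_le (a b : ℝ) :
    (max b 0 - max a 0) ^ 2 ≤ max b 0 ^ 2 - max a 0 ^ 2 - 2 * max a 0 * (b - a) := by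
  rcases le_total a 0 with ha | ha <;> rcases le_total b 0 with hb | hb <;>
    simp only [max_eq_left, max_eq_right, *] <;> nlinarith

section Variational

variable {ι κ : Type*} [Fintype ι] [Fintype κ]

def unservedRate (ρ : ι → ℝ) (S : κ → ι → ℝ) (α : κ → ℝ) : ι → ℝ :=
  fun q => max (ρ q - ∑ m, α m * S m q) 0

lemma sum_mul_le_of_le_of_sum_le_one {w β : κ → ℝ} {W : ℝ} (hW : 0 ≤ W) (hw : ∀ m, w m ≤ W)
    (hβ : ∀ m, 0 ≤ β m) (hβ1 : ∑ m, β m ≤ 1) : ∑ m, β m * w m ≤ W :=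
  calc ∑ m, β m * w m ≤ ∑ m, β m * W := sum_le_sum fun m _ => mul_le_mul_of_nonneg_left (hw m) (hβ m)
    _ = (∑ m, β m) * W := (sum_mul ..).symm
    _ ≤ W := mul_le_of_le_one_left hW hβ1

lemma sum_mul_sq_sub_unservedRate_le {ρ d : ι → ℝ} {S : κ → ι → ℝ} {α β : κ → ℝ}
    (hS : ∀ m q, 0 ≤ S m q) (hd : ∀ q, 0 ≤ d q) (hα : ∀ m, 0 ≤ α m)
    (hmax : ∀ j, ∑ q, S j q * (d q * unservedRate ρ S α q) ≤
      ∑ m, α m * ∑ q, S m q * (d q * unservedRate ρ S α q))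
    (hβ : ∀ m, 0 ≤ β m) (hβ1 : ∑ m, β m ≤ 1) :
    ∑ q, d q * (unservedRate ρ S β q - unservedRate ρ S α q) ^ 2 ≤
      ∑ q, unservedRate ρ S β q * (d q * unservedRate ρ S β q) -
        ∑ q, unservedRate ρ S α q * (d q * unservedRate ρ S α q) := by
  set η := unservedRate ρ S α
  set x := unservedRate ρ S β
  have hβα : ∑ m, β m * ∑ q, S m q * (d q * η q) ≤ ∑ m, α m * ∑ q, S m q * (d q * η q) :=
    sum_mul_le_of_le_of_sum_le_one (sum_nonneg fun m _ => mul_nonneg (hα m) <| sum_nonneg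
      fun q _ => mul_nonneg (hS m q) (mul_nonneg (hd q) (le_max_right _ _))) hmax hβ hβ1
  have hpoint : ∀ q, d q * (x q - η q) ^ 2 ≤ x q * (d q * x q) - η q * (d q * η q) -
      2 * (d q * η q * (∑ m, α m * S m q - ∑ m, β m * S m q)) := by
    intro q
    have h := mul_le_mul_of_nonneg_left
      (sq_max_zero_sub_le (ρ q - ∑ m, α m * S m q) (ρ q - ∑ m, β m * S m q)) (hd q)
    have hba : ρ q - ∑ m, β m * S m q - (ρ q - ∑ m, α m * S m q) =
        ∑ m, α m * S m q - ∑ m, β m * S m q := by ring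
    rw [hba] at h
    simp only [x, η, unservedRate]
    linarith
  have hcross : ∑ q, d q * η q * (∑ m, α m * S m q - ∑ m, β m * S m q) =
      ∑ m, α m * ∑ q, S m q * (d q * η q) - ∑ m, β m * ∑ q, S m q * (d q * η q) := by
    simp only [mul_sub, sum_sub_distrib, mul_sum]
    rw [sum_comm (f := fun q m => d q * η q * (α m * S m q)),
      sum_comm (f := fun q m => d q * η q * (β m * S m q))]
    congr 1 <;> exact sum_congr rfl fun m _ => sum_congr rfl fun q _ => by ring
  calc ∑ q, d q * (x q - η q) ^ 2
      ≤ ∑ q, (x q * (d q * x q) - η q * (d q * η q) -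
          2 * (d q * η q * (∑ m, α m * S m q - ∑ m, β m * S m q))) :=
        sum_le_sum fun q _ => hpoint q
    _ = ∑ q, x q * (d q * x q) - ∑ q, η q * (d q * η q) -
          2 * ∑ q, d q * η q * (∑ m, α m * S m q - ∑ m, β m * S m q) := by
        rw [sum_sub_distrib, sum_sub_distrib, mul_sum]
    _ ≤ ∑ q, x q * (d q * x q) - ∑ q, η q * (d q * η q) := by linarith

lemma eq_of_sum_mul_sq_sub_nonpos {d x y : ι → ℝ} (hd : ∀ q, 0 < d q)
    (h : ∑ q, d q * (x q - y q) ^ 2 ≤ 0) : x = y := by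
  have hnonneg : ∀ q ∈ univ, 0 ≤ d q * (x q - y q) ^ 2 :=
    fun q _ => mul_nonneg (hd q).le (sq_nonneg _)
  funext q
  have hq := (sum_eq_zero_iff_of_nonneg hnonneg).mp (h.antisymm (sum_nonneg hnonneg)) q (mem_univ q)
  simpa [(hd q).ne', sub_eq_zero] using hq

end Variational

section SingleQueue

variable {a c x : ℕ → ℝ}

lemma queue_nonneg (hx0 : x 0 = 0) (ha : ∀ t, 0 ≤ a t)
    (hx : ∀ t, x (t + 1) = x t + a t - min (c t) (x t)) (t : ℕ) : 0 ≤ x t := by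
  cases t with
  | zero => exact hx0.ge
  | succ t => rw [hx]; linarith [min_le_right (c t) (x t), ha t]

lemma sum_range_min_eq (hx0 : x 0 = 0) (hx : ∀ t, x (t + 1) = x t + a t - min (c t) (x t))
    (t : ℕ) : ∑ s ∈ range t, min (c s) (x s) = ∑ s ∈ range t, a s - x t := by
  induction t with
  | zero => simp [hx0]
  | succ t ih => rw [sum_range_succ, sum_range_succ, ih, hx]; ring

lemma growth_rate_eq_max_sub {ρ η v B : ℝ} {φ : ℕ → ℕ} (hx0 : x 0 = 0)
    (ha : ∀ t, 0 ≤ a t) (hx : ∀ t, x (t + 1) = x t + a t - min (c t) (x t))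
    (hcB : ∀ t, c t ≤ B)
    (hρ : Tendsto (fun t : ℕ => (∑ s ∈ range t, a s) / t) atTop (𝓝 ρ))
    (hη : Tendsto (fun t : ℕ => x t / t) atTop (𝓝 η)) (hφ : Tendsto φ atTop atTop)
    (hv : Tendsto (fun k => (∑ s ∈ range (φ k), c s) / φ k) atTop (𝓝 v)) :
    η = max (ρ - v) 0 := by
  have hdep : Tendsto (fun t : ℕ => (∑ s ∈ range t, min (c s) (x s)) / t) atTop (𝓝 (ρ - η)) := by
    simpa only [sum_range_min_eq hx0 hx, sub_div] using hρ.sub hη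
  have hle : ρ - η ≤ v := le_of_tendsto_of_tendsto' (hdep.comp hφ) hv fun k =>
    div_le_div_of_nonneg_right (sum_le_sum fun s _ => min_le_left _ _) (Nat.cast_nonneg _)
  have hη0 : 0 ≤ η := ge_of_tendsto' hη fun t =>
    div_nonneg (queue_nonneg hx0 ha hx t) (Nat.cast_nonneg t)
  rcases hη0.eq_or_lt with rfl | hpos
  · exact (max_eq_right (by linarith)).symm
  -- A linearly growing workload eventually exceeds every offered service, so idling stops.
  have hxtop : Tendsto x atTop atTop := by
    refine (hη.pos_mul_atTop hpos tendsto_natCast_atTop_atTop).congr' ?_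
    filter_upwards [eventually_ne_atTop 0] with t ht
    exact div_mul_cancel₀ _ (Nat.cast_ne_zero.mpr ht)
  have hidle : Tendsto (fun s => c s - min (c s) (x s)) atTop (𝓝 0) := by
    refine tendsto_const_nhds.congr' ?_
    filter_upwards [hxtop.eventually_ge_atTop B] with s hs
    rw [min_eq_left ((hcB s).trans hs), sub_self]
  have hserv : Tendsto (fun t : ℕ => (∑ s ∈ range t, c s) / t) atTop (𝓝 (ρ - η + 0)) := by
    refine (hdep.add hidle.cesaro).congr fun t => ?_
    rw [sum_sub_distrib, inv_mul_eq_div, sub_div]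
    ring
  have hv' : v = ρ - η := by simpa using tendsto_nhds_unique hv (hserv.comp hφ)
  rw [hv', sub_sub_cancel, max_eq_left hη0]

end SingleQueue

section EmpiricalFreq

variable {κ : Type*} [Fintype κ] [DecidableEq κ]

noncomputable def empiricalFreq (σ : ℕ → κ) (t : ℕ) (m : κ) : ℝ := #{s ∈ range t | σ s = m} / t

lemma sum_range_comp_div (σ : ℕ → κ) (f : κ → ℝ) (t : ℕ) :
    (∑ s ∈ range t, f (σ s)) / t = ∑ m, empiricalFreq σ t m * f m := by
  rw [← sum_fiberwise (range t) σ, sum_div]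
  refine sum_congr rfl fun m _ => ?_
  rw [sum_congr rfl fun s hs => congrArg f (mem_filter.mp hs).2, sum_const, nsmul_eq_mul,
    empiricalFreq, div_mul_eq_mul_div]

lemma empiricalFreq_mem_stdSimplex (σ : ℕ → κ) {t : ℕ} (ht : t ≠ 0) :
    empiricalFreq σ t ∈ stdSimplex ℝ κ := by
  refine ⟨fun m => by unfold empiricalFreq; positivity, ?_⟩
  simpa [div_self (Nat.cast_ne_zero.mpr ht : (t : ℝ) ≠ 0)] using
    (sum_range_comp_div σ (fun _ => 1) t).symm

lemma exists_tendsto_empiricalFreq_subseq (σ : ℕ → κ) :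
    ∃ α ∈ stdSimplex ℝ κ, ∃ φ : ℕ → ℕ, StrictMono φ ∧
      Tendsto (empiricalFreq σ ∘ φ) atTop (𝓝 α) :=
  (isCompact_stdSimplex ℝ κ).tendsto_subseq'
    ((eventually_ne_atTop 0).mono fun _ => empiricalFreq_mem_stdSimplex σ).frequently

lemma le_sum_mul_of_tendsto_empiricalFreq {σ : ℕ → κ} {w : κ → ℝ} {j : κ} {e : ℕ → ℝ}
    (he : Tendsto e atTop (𝓝 0)) (hj : ∀ t, w j ≤ w (σ t) + e t) {α : κ → ℝ} {φ : ℕ → ℕ}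
    (hφ : StrictMono φ) (hα : Tendsto (empiricalFreq σ ∘ φ) atTop (𝓝 α)) :
    w j ≤ ∑ m, α m * w m := by
  have havg : ∀ t : ℕ, t ≠ 0 →
      w j ≤ ∑ m, empiricalFreq σ t m * w m + (t : ℝ)⁻¹ * ∑ s ∈ range t, e s := by
    intro t ht
    have htpos : (0 : ℝ) < t := Nat.cast_pos.mpr (Nat.pos_of_ne_zero ht)
    rw [← sum_range_comp_div, inv_mul_eq_div, ← add_div, le_div_iff₀ htpos, ← sum_add_distrib]
    simpa [mul_comm] using sum_le_sum fun s (_ : s ∈ range t) => hj s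
  have hlim : Tendsto (fun k => ∑ m, empiricalFreq σ (φ k) m * w m +
      (φ k : ℝ)⁻¹ * ∑ s ∈ range (φ k), e s) atTop (𝓝 (∑ m, α m * w m + 0)) :=
    (tendsto_finsetSum _ fun m _ => (tendsto_pi_nhds.mp hα m).mul_const _).add
      (he.cesaro.comp hφ.tendsto_atTop)
  rw [← add_zero (∑ m, α m * w m)]
  refine ge_of_tendsto hlim ?_
  filter_upwards [hφ.tendsto_atTop.eventually_ne_atTop 0] with k hk using havg _ hk

lemma le_sum_mul_of_tendsto_of_le_apply {σ : ℕ → κ} {g : ℕ → κ → ℝ} {w : κ → ℝ}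
    (hg : Tendsto g atTop (𝓝 w)) (hmax : ∀ t j, g t j ≤ g t (σ t)) {α : κ → ℝ} {φ : ℕ → ℕ}
    (hφ : StrictMono φ) (hα : Tendsto (empiricalFreq σ ∘ φ) atTop (𝓝 α)) (j : κ) :
    w j ≤ ∑ m, α m * w m := by
  refine le_sum_mul_of_tendsto_empiricalFreq (e := fun t => 2 * dist (g t) w)
    (by simpa using (tendsto_iff_dist_tendsto_zero.mp hg).const_mul 2) (fun t => ?_) hφ hα
  have hdist : ∀ m, |g t m - w m| ≤ dist (g t) w := fun m => dist_le_pi_dist (g t) w m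
  linarith [hmax t j, abs_sub_le_iff.mp (hdist j), abs_sub_le_iff.mp (hdist (σ t))]

end EmpiricalFreq

theorem stmt11_general {Q N : ℕ}
    (A : ℕ → Fin Q → ℝ)
    (hA0 : ∀ t q, 0 ≤ A t q)
    (ρ : Fin Q → ℝ)
    (hρ : ∀ q, Tendsto (fun t : ℕ => (∑ s ∈ Finset.range t, A s q) / (t : ℝ))
      atTop (𝓝 (ρ q)))
    (S : Fin N → Fin Q → ℝ) (hS : ∀ i q, 0 ≤ S i q)
    (σ : ℕ → Fin N)
    (d : Fin Q → ℝ) (hd : ∀ q, 0 < d q)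
    (X : ℕ → Fin Q → ℝ) (hX0 : ∀ q, X 0 q = 0)
    (hXrec : ∀ t q, X (t + 1) q = X t q + A t q - min (S (σ t) q) (X t q))
    (hMW : ∀ t j, ∑ q, S j q * (d q * X t q) ≤ ∑ q, S (σ t) q * (d q * X t q))
    (η : Fin Q → ℝ)
    (hηlim : Tendsto (fun t : ℕ => fun q => X t q / (t : ℝ)) atTop (𝓝 η)) :
    η ∈ Psi ρ S ∧
    (∀ x ∈ Psi ρ S, ∑ q, η q * (d q * η q) ≤ ∑ q, x q * (d q * x q)) ∧
    (∀ x ∈ Psi ρ S, ∑ q, x q * (d q * x q) = ∑ q, η q * (d q * η q) → x = η) := by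
  obtain ⟨α, ⟨hα0, hα1⟩, φ, hφ, hfreq⟩ := exists_tendsto_empiricalFreq_subseq σ
  have hη : η = unservedRate ρ S α := funext fun q =>
    growth_rate_eq_max_sub (hX0 q) (hA0 · q) (hXrec · q)
      (fun t => single_le_sum (fun m _ => hS m q) (mem_univ (σ t))) (hρ q)
      (tendsto_pi_nhds.mp hηlim q) hφ.tendsto_atTop <|
      (tendsto_finsetSum _ fun m _ => (tendsto_pi_nhds.mp hfreq m).mul_const (S m q)).congr
        fun k => (sum_range_comp_div σ (S · q) (φ k)).symm
  have hweight : Continuous fun y : Fin Q → ℝ => fun j => ∑ q, S j q * (d q * y q) := by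
    fun_prop
  have hmax := le_sum_mul_of_tendsto_of_le_apply
    (g := fun t j => (∑ q, S j q * (d q * X t q)) / t)
    (((hweight.tendsto η).comp hηlim).congr fun t => funext fun j => by
      simp only [Function.comp_apply, sum_div, mul_div_assoc])
    (fun t j => div_le_div_of_nonneg_right (hMW t j) t.cast_nonneg) hφ hfreq
  subst hη
  have hgap : ∀ x ∈ Psi ρ S, ∑ q, d q * (x q - unservedRate ρ S α q) ^ 2 ≤
      ∑ q, x q * (d q * x q) - ∑ q, unservedRate ρ S α q * (d q * unservedRate ρ S α q) := by
    rintro x ⟨β, hβ0, hβ1, rfl⟩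
    exact sum_mul_sq_sub_unservedRate_le hS (fun q => (hd q).le) hα0 hmax hβ0 hβ1
  refine ⟨⟨α, hα0, hα1.le, rfl⟩, fun x hx => ?_, fun x hx hxη => ?_⟩
  · linarith [hgap x hx, sum_nonneg fun q (_ : q ∈ univ) =>
      mul_nonneg (hd q).le (sq_nonneg (x q - unservedRate ρ S α q))]
  · exact eq_of_sum_mul_sq_sub_nonpos hd (by linarith [hgap x hx])

/-- the limit η of X(t)/t under MaxWeight in overload is the unique
minimizer of ⟨x, Dx⟩ over Ψ(ρ,𝒮). -/
theorem stmt11 {Q N : ℕ} (hQ : 0 < Q) (hN : 0 < N)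
    (A : ℕ → Fin Q → ℝ) (Abar : Fin Q → ℝ)
    (hA0 : ∀ t q, 0 ≤ A t q) (hAbar : ∀ t q, A t q ≤ Abar q)
    (ρ : Fin Q → ℝ) (hρpos : ∀ q, 0 < ρ q)
    (hρ : ∀ q, Tendsto (fun t : ℕ => (∑ s ∈ Finset.range t, A s q) / (t : ℝ))
      atTop (𝓝 (ρ q)))
    (S : Fin N → Fin Q → ℝ) (hS : ∀ i q, 0 ≤ S i q)
    (σ : ℕ → Fin N)
    (d : Fin Q → ℝ) (hd : ∀ q, 0 < d q)
    (X : ℕ → Fin Q → ℝ) (hX0 : ∀ q, X 0 q = 0)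
    (hXrec : ∀ t q, X (t + 1) q = X t q + A t q - min (S (σ t) q) (X t q))
    (hMW : ∀ t j, ∑ q, S j q * (d q * X t q) ≤ ∑ q, S (σ t) q * (d q * X t q))
    (hover : ρ ∉ stabRegion S)
    (η : Fin Q → ℝ)
    (hηlim : Tendsto (fun t : ℕ => fun q => X t q / (t : ℝ)) atTop (𝓝 η)) :
    η ∈ Psi ρ S ∧
    (∀ x ∈ Psi ρ S, ∑ q, η q * (d q * η q) ≤ ∑ q, x q * (d q * x q)) ∧
    (∀ x ∈ Psi ρ S, ∑ q, x q * (d q * x q) = ∑ q, η q * (d q * η q) → x = η) :=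
  stmt11_general A hA0 ρ hρ S hS σ d hd X hX0 hXrec hMW η hηlim
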